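/- Let d ≥ 1, z ∈ EuclideanSpace ℝ (Fin d), and let (a_j)_{j ∈ ℕ} be reals with 0 ≤ a_j ≤ 1. Define F(λ) = ∑'_{j ∈ ℕ} c_j(λ) * a_j with c_j(λ) = (λ/2)^j * Real.exp(-λ/2)/j!, and let μ ∈ EuclideanSpace ℝ (Fin d) be such that F(‖μ - z‖²) < 1. Then the function G(μ) = Real.log (1 - F(‖μ - z‖²)) is differentiable at μ and its gradient at μ equals ((∑'_{j ∈ ℕ} c_j(λ) * (a_{j+1} - a_j)) / (F(λ) - 1)) • (μ - z), where λ = ‖μ - z‖². That is, the DPS guidance term ∇_μ log P(X ∉ B_r(z)) for X ~ N(μ, I_d) has the form ω(λ, r) • (μ - z) with weight ω(λ, r) = (2/(F_{χ²_{nc,d}(λ)}(r²) - 1)) · ∂F_{χ²_{nc,d}(λ)}/∂λ (r²). -/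

import Mathlib

/-- The Poisson mixture weight `c_j(λ) = (λ/2)^j e^{-λ/2}/j!`. -/
noncomputable def poissonWeight (j : ℕ) (l : ℝ) : ℝ :=
  (l / 2) ^ j * Real.exp (-l / 2) / (Nat.factorial j)

/-!
Writing `E_b(x) = ∑ x^j / j! * b_j` for the exponential generating function of a bounded sequence,
the mixture is `F(λ) = ∑ c_j(λ) a_j = e^{-λ/2} E_a(λ/2)`. Termwise differentiation gives
`E_a' = E_{a(· + 1)}`, hence `F'(λ) = ½ ∑ c_j(λ) (a_{j+1} - a_j)`, and the chain rule through
`∇_ν ‖ν - z‖² = 2 (ν - z)` turns `log (1 - F(‖ν - z‖²))` into a radial gradient.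
-/

open Nat

noncomputable def egf (b : ℕ → ℝ) (x : ℝ) : ℝ := ∑' j, x ^ j / j ! * b j

section egf

variable {b : ℕ → ℝ} {C : ℝ}

lemma summable_pow_div_factorial_mul (hb : ∀ j, |b j| ≤ C) (x : ℝ) :
    Summable fun j => x ^ j / j ! * b j := by
  refine .of_norm_bounded ((Real.summable_pow_div_factorial |x|).mul_right C) fun j => ?_
  rw [Real.norm_eq_abs, abs_mul, abs_div, abs_pow, Nat.abs_cast]
  gcongr
  exact hb j

lemma succ_mul_pow_div_factorial_succ (y : ℝ) (n : ℕ) :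
    (n + 1 : ℕ) * y ^ n / (n + 1)! = y ^ n / n ! := by
  rw [Nat.factorial_succ, Nat.cast_mul, mul_div_mul_left]
  positivity

lemma hasDerivAt_egf (hb : ∀ j, |b j| ≤ C) (x : ℝ) :
    HasDerivAt (egf b) (egf (fun j => b (j + 1)) x) x := by
  set R := |x| + 1
  have hC : 0 ≤ C := (abs_nonneg _).trans (hb 0)
  have hx : x ∈ Set.Ioo (-R) R := abs_lt.1 (by linarith)
  have hderiv : ∀ j y, HasDerivAt (fun y => y ^ j / j ! * b j) (j * y ^ (j - 1) / j ! * b j) y :=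
    fun j y => ((hasDerivAt_pow j y).div_const _).mul_const _
  have hbound : ∀ (j : ℕ), ∀ y ∈ Set.Ioo (-R) R,
      ‖(j : ℝ) * y ^ (j - 1) / j ! * b j‖ ≤ R ^ (j - 1) / (j - 1)! * C := by
    rintro (_ | n) y hy
    · simpa using hC
    · rw [Nat.add_sub_cancel, succ_mul_pow_div_factorial_succ, Real.norm_eq_abs, abs_mul,
        abs_div, abs_pow, Nat.abs_cast]
      gcongr
      · exact (abs_lt.2 hy).le
      · exact hb _
  have hu : Summable fun j => R ^ (j - 1) / (j - 1)! * C :=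
    (summable_nat_add_iff 1).1 (by simpa using (Real.summable_pow_div_factorial R).mul_right C)
  refine (hasDerivAt_tsum_of_isPreconnected hu isOpen_Ioo isPreconnected_Ioo
    (fun j y _ => hderiv j y) hbound hx (summable_pow_div_factorial_mul hb x) hx).congr_deriv ?_
  rw [tsum_eq_zero_add' ?_]
  · simp only [egf, Nat.add_sub_cancel, succ_mul_pow_div_factorial_succ, Nat.cast_zero,
      zero_mul, zero_div, zero_add]
  · simpa only [Nat.add_sub_cancel, succ_mul_pow_div_factorial_succ]
      using summable_pow_div_factorial_mul (fun j => hb (j + 1)) x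

end egf

lemma tsum_poissonWeight_mul (b : ℕ → ℝ) (l : ℝ) :
    ∑' j, poissonWeight j l * b j = Real.exp (-l / 2) * egf b (l / 2) := by
  rw [egf, ← tsum_mul_left]
  congr 1 with j
  rw [poissonWeight]
  ring

lemma hasDerivAt_tsum_poissonWeight_mul {b : ℕ → ℝ} {C : ℝ} (hb : ∀ j, |b j| ≤ C) (l : ℝ) :
    HasDerivAt (fun t => ∑' j, poissonWeight j t * b j)
      ((∑' j, poissonWeight j l * (b (j + 1) - b j)) / 2) l := by
  have hexp : HasDerivAt (fun t => Real.exp (-t / 2)) (Real.exp (-l / 2) * (-1 / 2)) l :=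
    ((hasDerivAt_neg l).div_const 2).exp
  have hsum : HasDerivAt (fun t => egf b (t / 2))
      (egf (fun j => b (j + 1)) (l / 2) * (1 / 2)) l := by
    exact (hasDerivAt_egf hb (l / 2)).comp l ((hasDerivAt_id l).div_const 2)
  have hdiff : egf (fun j => b (j + 1) - b j) (l / 2)
      = egf (fun j => b (j + 1)) (l / 2) - egf b (l / 2) := by
    simp only [egf, mul_sub]
    exact (summable_pow_div_factorial_mul (fun j => hb (j + 1)) _).tsum_sub
      (summable_pow_div_factorial_mul hb _)
  simp only [tsum_poissonWeight_mul]
  refine (hexp.mul hsum).congr_deriv ?_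
  rw [hdiff]
  ring

lemma HasDerivAt.hasGradientAt_comp_norm_sub_sq {E : Type*} [NormedAddCommGroup E]
    [InnerProductSpace ℝ E] [CompleteSpace E] {f : ℝ → ℝ} {f' : ℝ} {x z : E}
    (hf : HasDerivAt f f' (‖x - z‖ ^ 2)) :
    HasGradientAt (fun y => f (‖y - z‖ ^ 2)) ((2 * f') • (x - z)) x := by
  rw [hasGradientAt_iff_hasFDerivAt]
  refine (hf.comp_hasFDerivAt x ((hasFDerivAt_id x).sub_const z).norm_sq).congr_fderiv ?_
  ext v
  simp only [ContinuousLinearMap.comp_id, smul_apply, sub_apply, coe_innerSL_apply, smul_eq_mul,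
    map_smul, InnerProductSpace.toDual_apply_apply, id_eq, nsmul_eq_mul, map_sub]
  ring

theorem dps_guidance_radial_general (d : ℕ) (z : EuclideanSpace ℝ (Fin d))
    (a : ℕ → ℝ) (ha : ∀ j, 0 ≤ a j ∧ a j ≤ 1) (μ : EuclideanSpace ℝ (Fin d))
    (hF : (∑' j : ℕ, poissonWeight j (‖μ - z‖ ^ 2) * a j) < 1) :
    HasGradientAt
      (fun ν : EuclideanSpace ℝ (Fin d) =>
        Real.log (1 - ∑' j : ℕ, poissonWeight j (‖ν - z‖ ^ 2) * a j))
      (((∑' j : ℕ, poissonWeight j (‖μ - z‖ ^ 2) * (a (j + 1) - a j)) /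
          ((∑' j : ℕ, poissonWeight j (‖μ - z‖ ^ 2) * a j) - 1)) • (μ - z)) μ := by
  have hb : ∀ j, |a j| ≤ 1 := fun j => abs_le.2 ⟨by linarith [(ha j).1], (ha j).2⟩
  have hlog := ((hasDerivAt_tsum_poissonWeight_mul hb (‖μ - z‖ ^ 2)).const_sub 1).log
    (sub_ne_zero.2 hF.ne')
  convert hlog.hasGradientAt_comp_norm_sub_sq using 2
  rw [neg_div, ← div_neg, neg_sub]
  ring

/-- The DPS guidance term `∇_μ log P(X ∉ B_r(z))` for `X ~ N(μ, I_d)` has the radial form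
`ω • (μ - z)`, where the survival probability is written via the noncentral chi-square CDF
`F(λ) = Σ_j c_j(λ) a_j` at `λ = ‖μ - z‖²`. -/
theorem dps_guidance_radial (d : ℕ) (hd : 1 ≤ d) (z : EuclideanSpace ℝ (Fin d))
    (a : ℕ → ℝ) (ha : ∀ j, 0 ≤ a j ∧ a j ≤ 1) (μ : EuclideanSpace ℝ (Fin d))
    (hF : (∑' j : ℕ, poissonWeight j (‖μ - z‖ ^ 2) * a j) < 1) :
    HasGradientAt
      (fun ν : EuclideanSpace ℝ (Fin d) =>
        Real.log (1 - ∑' j : ℕ, poissonWeight j (‖ν - z‖ ^ 2) * a j))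
      (((∑' j : ℕ, poissonWeight j (‖μ - z‖ ^ 2) * (a (j + 1) - a j)) /
          ((∑' j : ℕ, poissonWeight j (‖μ - z‖ ^ 2) * a j) - 1)) • (μ - z)) μ :=
  dps_guidance_radial_general d z a ha μ hF
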